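/- arXiv:1001.5076 — 2 statements merged into one kernel-verified Lean document; each statement's English description precedes it below -/
import Mathlib

section
/- Fix K ≥ 2 and ε < 1/K². Consider K² + 1 impressions and K² advertisers, each with demand 1: advertiser i (1 ≤ i ≤ K²) has value ε for impression i, advertiser 1 has value K for a special impression s, and every other advertiser has value 1 for s; all other values are 0. The maximum-weight matching has value at least K, while the equal-sharing fair allocation (where s is split equally among all K² advertisers) gives advertiser 1 value K/K² from s, so the total value of the equal-sharing allocation is at most K/K² + (K² - 1)·(1/K² + ε) + K²·ε ≤ 2 + K²ε + 1. Hence the ratio of the equal-sharing allocation's value to the optimum tends to 0 as K → ∞. -/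
/-!
Giving the special impression wholly to advertiser 1 already earns `K`. Equal sharing earns
`ε` on each of the `K²` diagonal impressions and `(K + (K² - 1)) / K² = 1 + (K - 1) / K² ≤ 2`
from the special one, in total less than `3` once `K² ε < 1`.
-/

open Finset

section FractionalAllocation

variable {ι α : Type*} [Fintype ι] [Fintype α]

/-- `x i j` is the share of impression `i` given to advertiser `j`; all demands are `1`. -/
def IsFractionalAllocation (x : ι → α → ℝ) : Prop :=
  (∀ i j, 0 ≤ x i j) ∧ (∀ i, ∑ j, x i j ≤ 1) ∧ (∀ j, ∑ i, x i j ≤ 1)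

variable [DecidableEq ι] [DecidableEq α]

def singleAlloc (i₀ : ι) (j₀ : α) : ι → α → ℝ :=
  Pi.single i₀ (Pi.single j₀ 1)

theorem isFractionalAllocation_singleAlloc (i₀ : ι) (j₀ : α) :
    IsFractionalAllocation (singleAlloc i₀ j₀) := by
  unfold singleAlloc
  refine ⟨fun i j => ?_, fun i => ?_, fun j => ?_⟩
  · by_cases hi : i = i₀ <;> by_cases hj : j = j₀ <;> simp [hi, hj]
  · by_cases hi : i = i₀ <;> simp [hi]
  · rw [← Finset.sum_apply, Finset.sum_pi_single', if_pos (mem_univ _)]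
    by_cases hj : j = j₀ <;> simp [hj]

theorem sum_sum_mul_singleAlloc (w : ι → α → ℝ) (i₀ : ι) (j₀ : α) :
    ∑ i, ∑ j, w i j * singleAlloc i₀ j₀ i j = w i₀ j₀ := by
  unfold singleAlloc
  rw [Fintype.sum_eq_single i₀ fun i hi => by simp [hi],
    Fintype.sum_eq_single j₀ fun j hj => by simp [hj]]
  simp

end FractionalAllocation

theorem Fintype.sum_ite_eq_add_card_sub_one_mul {α R : Type*} [Fintype α] [DecidableEq α]
    [Ring R] (j₀ : α) (a b : R) :
    ∑ j, (if j = j₀ then a else b) = a + (Fintype.card α - 1) * b := by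
  rw [Fintype.sum_eq_add_sum_compl j₀, if_pos rfl,
    Finset.sum_congr rfl fun j hj => if_neg (by simpa using hj), sum_const, card_compl,
    card_singleton, nsmul_eq_mul, Nat.cast_sub (Fintype.card_pos_iff.2 ⟨j₀⟩),
    Nat.cast_one]

theorem stmt_9_general (K : ℕ) (ε : ℝ) (hε : ε < 1 / (K : ℝ) ^ 2)
    (hKpos : 0 < K ^ 2)
    (w : Fin (K ^ 2) ⊕ Unit → Fin (K ^ 2) → ℝ)
    (hw1 : ∀ i j : Fin (K ^ 2), w (Sum.inl i) j = if i = j then ε else 0)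
    (hw2 : ∀ j : Fin (K ^ 2), w (Sum.inr ()) j =
      if j = (⟨0, hKpos⟩ : Fin (K ^ 2)) then (K : ℝ) else 1)
    (xf : Fin (K ^ 2) ⊕ Unit → Fin (K ^ 2) → ℝ)
    (hxf1 : ∀ i j : Fin (K ^ 2), xf (Sum.inl i) j = if i = j then 1 else 0)
    (hxf2 : ∀ j : Fin (K ^ 2), xf (Sum.inr ()) j = 1 / (K : ℝ) ^ 2) :
    (∃ x : Fin (K ^ 2) ⊕ Unit → Fin (K ^ 2) → ℝ,
      (∀ i j, 0 ≤ x i j) ∧ (∀ i, ∑ j, x i j ≤ 1) ∧ (∀ j, ∑ i, x i j ≤ 1) ∧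
      (K : ℝ) ≤ ∑ i, ∑ j, w i j * x i j) ∧
    (∑ i, ∑ j, w i j * xf i j ≤ 3 + (K : ℝ) ^ 2 * ε) ∧
    ((∑ i, ∑ j, w i j * xf i j) / K ≤ 4 / (K : ℝ)) := by
  have hK : (1 : ℝ) ≤ K := by exact_mod_cast (pow_pos_iff two_ne_zero).1 hKpos
  have hK2 : (0 : ℝ) < (K : ℝ) ^ 2 := by positivity
  have hεK : (K : ℝ) ^ 2 * ε < 1 := by rw [mul_comm]; rwa [lt_div_iff₀ hK2] at hε
  have hval : ∑ i, ∑ j, w i j * xf i j = K ^ 2 * ε + (1 + (K - 1) / K ^ 2) := by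
    rw [Fintype.sum_sum_type]
    congr 1
    · simp [hw1, hxf1]
    · simp only [Fintype.sum_unique, hw2, hxf2, ← sum_mul,
        Fintype.sum_ite_eq_add_card_sub_one_mul, Fintype.card_fin]
      field_simp
      push_cast
      ring
  have hshare : ((K : ℝ) - 1) / K ^ 2 ≤ 1 := by
    rw [div_le_one hK2]; nlinarith
  obtain ⟨hnonneg, hrow, hcol⟩ := isFractionalAllocation_singleAlloc
    (Sum.inr () : Fin (K ^ 2) ⊕ Unit) (⟨0, hKpos⟩ : Fin (K ^ 2))
  refine ⟨⟨_, hnonneg, hrow, hcol, ?_⟩, by linarith, ?_⟩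
  · rw [sum_sum_mul_singleAlloc, hw2, if_pos rfl]
  · exact div_le_div_of_nonneg_right (by linarith) (by positivity)

/-- Equal-sharing fair allocations can be arbitrarily inefficient: the optimum is at
least `K` while the equal-sharing allocation has value at most `3 + K²ε`, so the ratio
is at most `4/K`. -/
theorem stmt_9 (K : ℕ) (hK : 2 ≤ K) (ε : ℝ) (hε0 : 0 < ε) (hε : ε < 1 / (K : ℝ) ^ 2)
    (hKpos : 0 < K ^ 2)
    (w : Fin (K ^ 2) ⊕ Unit → Fin (K ^ 2) → ℝ)
    (hw1 : ∀ i j : Fin (K ^ 2), w (Sum.inl i) j = if i = j then ε else 0)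
    (hw2 : ∀ j : Fin (K ^ 2), w (Sum.inr ()) j =
      if j = (⟨0, hKpos⟩ : Fin (K ^ 2)) then (K : ℝ) else 1)
    (xf : Fin (K ^ 2) ⊕ Unit → Fin (K ^ 2) → ℝ)
    (hxf1 : ∀ i j : Fin (K ^ 2), xf (Sum.inl i) j = if i = j then 1 else 0)
    (hxf2 : ∀ j : Fin (K ^ 2), xf (Sum.inr ()) j = 1 / (K : ℝ) ^ 2) :
    (∃ x : Fin (K ^ 2) ⊕ Unit → Fin (K ^ 2) → ℝ,
      (∀ i j, 0 ≤ x i j) ∧ (∀ i, ∑ j, x i j ≤ 1) ∧ (∀ j, ∑ i, x i j ≤ 1) ∧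
      (K : ℝ) ≤ ∑ i, ∑ j, w i j * x i j) ∧
    (∑ i, ∑ j, w i j * xf i j ≤ 3 + (K : ℝ) ^ 2 * ε) ∧
    ((∑ i, ∑ j, w i j * xf i j) / K ≤ 4 / (K : ℝ)) :=
  stmt_9_general K ε hε hKpos w hw1 hw2 xf hxf1 hxf2
end

section
/- In the Fair Allocation algorithm setting with sharing policy H monotone in the sense that enlarging the set J(i) of interested advertisers for an impression i never increases the share of any advertiser already in J(i): if x₁ and x₂ are two fair allocations under H with interest sets I₁(j) and I₂(j) (each a prefix of advertiser j's preference order), then the allocation in which each advertiser j is interested in I₁(j) ∩ I₂(j) is also a fair allocation under H. Consequently there exists a unique shortest fair allocation (minimizing all interest sets simultaneously under inclusion). -/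
open scoped Classical

/-- Advertisers interested in impression `i` when each advertiser `j` requests the prefix
of length `p j` of its preference order `pref j`. -/
def interestSet {J : Type*} {nI : ℕ} (pref : J → Fin nI ≃ Fin nI) (p : J → ℕ)
    (i : Fin nI) : Set J :=
  {j | ∃ k : Fin nI, (k : ℕ) < p j ∧ pref j k = i}

/-- The allocation obtained by applying the sharing policy `H` to the interest sets. -/
noncomputable def alloc {J : Type*} {nI : ℕ} (pref : J → Fin nI ≃ Fin nI)
    (H : Fin nI → Set J → J → ℝ) (p : J → ℕ) (i : Fin nI) (j : J) : ℝ :=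
  if j ∈ interestSet pref p i then H i (interestSet pref p i) j else 0

/-- `p` describes a fair allocation under the sharing policy `H`: each advertiser's
interest set is a prefix, the allocation is `H` applied to the interest sets, and each
advertiser is either interested in all impressions or receives at least its demand. -/
def IsFair {J : Type*} [Fintype J] {nI : ℕ} (pref : J → Fin nI ≃ Fin nI)
    (H : Fin nI → Set J → J → ℝ) (d : J → ℝ) (p : J → ℕ) : Prop :=
  (∀ j, p j ≤ nI) ∧ ∀ j, p j = nI ∨ d j ≤ ∑ i, alloc pref H p i j

lemma interest_mono {J : Type*} {nI : ℕ} (pref : J → Fin nI ≃ Fin nI) {p q : J → ℕ}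
    (h : ∀ j, p j ≤ q j) (i : Fin nI) : interestSet pref p i ⊆ interestSet pref q i := by
  rintro j ⟨k, hk, hki⟩
  exact ⟨k, hk.trans_le (h j), hki⟩

lemma alloc_ge {J : Type*} {nI : ℕ} (pref : J → Fin nI ≃ Fin nI)
    (H : Fin nI → Set J → J → ℝ)
    (Hmono : ∀ (i : Fin nI) (S S' : Set J) (j : J), S ⊆ S' → j ∈ S → H i S' j ≤ H i S j)
    {p q : J → ℕ} (hpq : ∀ j', p j' ≤ q j') {j : J} (hj : p j = q j) (i : Fin nI) :
    alloc pref H q i j ≤ alloc pref H p i j := by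
  have hmem : j ∈ interestSet pref p i ↔ j ∈ interestSet pref q i := by
    simp [interestSet, hj]
  unfold alloc
  by_cases h : j ∈ interestSet pref p i
  · rw [if_pos h, if_pos (hmem.mp h)]
    exact Hmono i _ _ j (interest_mono pref hpq i) h
  · rw [if_neg h, if_neg (fun hc => h (hmem.mpr hc))]

lemma minFair {J : Type*} [Fintype J] {nI : ℕ}
    (pref : J → Fin nI ≃ Fin nI) (H : Fin nI → Set J → J → ℝ) (d : J → ℝ)
    (Hmono : ∀ (i : Fin nI) (S S' : Set J) (j : J), S ⊆ S' → j ∈ S → H i S' j ≤ H i S j)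
    (p₁ p₂ : J → ℕ) (h₁ : IsFair pref H d p₁) (h₂ : IsFair pref H d p₂) :
    IsFair pref H d (fun j => min (p₁ j) (p₂ j)) := by
  constructor
  · intro j; exact le_trans (min_le_left _ _) (h₁.1 j)
  · intro j
    rcases le_total (p₁ j) (p₂ j) with h | h
    · have hj : min (p₁ j) (p₂ j) = p₁ j := min_eq_left h
      rcases h₁.2 j with hn | hd
      · left; simpa [hj] using hn
      · right
        refine hd.trans (Finset.sum_le_sum fun i _ => ?_)
        exact alloc_ge pref H Hmono (fun j' => min_le_left _ _) hj i
    · have hj : min (p₁ j) (p₂ j) = p₂ j := min_eq_right h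
      rcases h₂.2 j with hn | hd
      · left; simpa [hj] using hn
      · right
        refine hd.trans (Finset.sum_le_sum fun i _ => ?_)
        exact alloc_ge pref H Hmono (fun j' => min_le_right _ _) hj i

/-- For a monotone sharing policy, the pointwise minimum of two fair allocations is
fair; consequently there is a unique shortest fair allocation. -/
theorem stmt_14 {J : Type*} [Fintype J] {nI : ℕ}
    (pref : J → Fin nI ≃ Fin nI) (H : Fin nI → Set J → J → ℝ) (d : J → ℝ)
    (Hmono : ∀ (i : Fin nI) (S S' : Set J) (j : J), S ⊆ S' → j ∈ S → H i S' j ≤ H i S j)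
    (p₁ p₂ : J → ℕ) (h₁ : IsFair pref H d p₁) (h₂ : IsFair pref H d p₂) :
    IsFair pref H d (fun j => min (p₁ j) (p₂ j)) ∧
    ∃! p : J → ℕ, IsFair pref H d p ∧
      ∀ p' : J → ℕ, IsFair pref H d p' → ∀ j, p j ≤ p' j := by
  refine ⟨minFair pref H d Hmono p₁ p₂ h₁ h₂, ?_⟩
  set pm : J → ℕ := fun j => sInf {n | ∃ q, IsFair pref H d q ∧ q j = n} with hpm
  have hne : ∀ j, {n | ∃ q, IsFair pref H d q ∧ q j = n}.Nonempty :=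
    fun j => ⟨p₁ j, p₁, h₁, rfl⟩
  have hmin : ∀ q, IsFair pref H d q → ∀ j, pm j ≤ q j :=
    fun q hq j => Nat.sInf_le ⟨q, hq, rfl⟩
  -- for each j, the infimum is attained
  have hatt : ∀ j, ∃ q, IsFair pref H d q ∧ q j = pm j := fun j => Nat.sInf_mem (hne j)
  -- by induction on finsets, find a fair q matching pm on s
  have key : ∀ s : Finset J, ∃ q, IsFair pref H d q ∧ ∀ j ∈ s, q j ≤ pm j := by
    intro s
    induction s using Finset.induction_on with
    | empty => exact ⟨p₁, h₁, by simp⟩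
    | @insert b s hb ih =>
      obtain ⟨q, hq, hqs⟩ := ih
      obtain ⟨qa, hqa, hqav⟩ := hatt b
      refine ⟨fun j => min (q j) (qa j), minFair pref H d Hmono q qa hq hqa, ?_⟩
      intro j hj
      rcases Finset.mem_insert.mp hj with rfl | hj
      · exact le_trans (min_le_right _ _) (le_of_eq hqav)
      · exact le_trans (min_le_left _ _) (hqs j hj)
  obtain ⟨q, hq, hqle⟩ := key Finset.univ
  have hqeq : q = pm := by
    funext j
    exact le_antisymm (hqle j (Finset.mem_univ j)) (hmin q hq j)
  refine ⟨pm, ⟨hqeq ▸ hq, fun p' hp' j => hmin p' hp' j⟩, ?_⟩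
  rintro p ⟨hpf, hplow⟩
  funext j
  exact le_antisymm (hplow pm (hqeq ▸ hq) j) (hmin p hpf j)
end
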